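/- Let F₁ : I → ℝ be the map x ↦ √x on an interval I ⊆ (0,∞) and suppose f : U → (0,∞) is m-times continuously differentiable with |f|_{C^j} ≤ C h^{4+j} for 1 ≤ j ≤ m and f ≈ h⁴ (i.e., c₁h⁴ ≤ f ≤ c₂h⁴ pointwise). Then the composition g = √f satisfies |g|_{C^m} ≤ C' h^{2+m}, where C' depends only on m, C, c₁, c₂. -/

import Mathlib

/-!
Rescale: `φ = h⁻⁴ f` takes values in the compact interval `[c₁, c₂] ⊂ (0, ∞)` and satisfies
`‖Dʲ φ‖ ≤ C hʲ ≤ (max C 1 · h)ʲ`, while `√f = h² √φ`. On `[c₁, c₂]` all derivatives of `√` up to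
order `m` are bounded by a constant depending only on `m, c₁, c₂`, so the Faà di Bruno bound
gives `‖Dᵐ (√ ∘ φ)‖ ≤ K (max C 1 · h)ᵐ`, and the factor `h²` yields `h^{2+m}`.
-/

open Set

section CompositionBounds

variable {𝕜 : Type*} [NontriviallyNormedField 𝕜]
  {E F G : Type*} [NormedAddCommGroup E] [NormedSpace 𝕜 E] [NormedAddCommGroup F] [NormedSpace 𝕜 F]
  [NormedAddCommGroup G] [NormedSpace 𝕜 G]

theorem norm_iteratedFDerivWithin_const_smul_apply {f : E → F} {s : Set E} {x : E} {i : ℕ}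
    (a : 𝕜) (hf : ContDiffWithinAt 𝕜 i f s x) (hs : UniqueDiffOn 𝕜 s) (hx : x ∈ s) :
    ‖iteratedFDerivWithin 𝕜 i (a • f) s x‖ = ‖a‖ * ‖iteratedFDerivWithin 𝕜 i f s x‖ := by
  rw [iteratedFDerivWithin_const_smul_apply hf hs hx, norm_smul]

theorem ContDiffOn.exists_bound_norm_iteratedFDerivWithin {n : ℕ} {g : F → G} {t S : Set F}
    (hg : ContDiffOn 𝕜 n g t) (ht : UniqueDiffOn 𝕜 t) (hS : IsCompact S) (hSt : S ⊆ t) :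
    ∃ K, ∀ i ≤ n, ∀ y ∈ S, ‖iteratedFDerivWithin 𝕜 i g t y‖ ≤ K := by
  obtain ⟨K, hK⟩ : BddAbove (⋃ i ∈ Iic n, (‖iteratedFDerivWithin 𝕜 i g t ·‖) '' S) :=
    (finite_Iic n).bddAbove_biUnion.2 fun i hi =>
      hS.bddAbove_image ((hg.continuousOn_iteratedFDerivWithin (mod_cast hi) ht).norm.mono hSt)
  exact ⟨K, fun i hi y hy => hK (mem_biUnion (mem_Iic.2 hi) (mem_image_of_mem _ hy))⟩

theorem ContDiffOn.exists_norm_iteratedFDerivWithin_comp_le {n : ℕ} {g : F → G} {t S : Set F}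
    (hg : ContDiffOn 𝕜 n g t) (ht : UniqueDiffOn 𝕜 t) (hS : IsCompact S) (hSt : S ⊆ t) :
    ∃ K, ∀ {s : Set E} {φ : E → F} {r : ℝ} {x : E}, ContDiffOn 𝕜 n φ s → UniqueDiffOn 𝕜 s →
      MapsTo φ s S → x ∈ s → (∀ i, 1 ≤ i → i ≤ n → ‖iteratedFDerivWithin 𝕜 i φ s x‖ ≤ r ^ i) →
      ‖iteratedFDerivWithin 𝕜 n (g ∘ φ) s x‖ ≤ K * r ^ n := by
  obtain ⟨K, hK⟩ := hg.exists_bound_norm_iteratedFDerivWithin ht hS hSt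
  refine ⟨n.factorial * K, fun hφ hs hφS hx hφr => ?_⟩
  exact norm_iteratedFDerivWithin_comp_le hg hφ le_rfl ht hs (hφS.mono_right hSt) hx
    (fun i hi => hK i hi _ (hφS hx)) hφr

end CompositionBounds

theorem Real.sqrt_eq_sq_mul_sqrt_inv_pow_four_mul {h : ℝ} (hh : h ≠ 0) (y : ℝ) :
    √y = h ^ 2 * √((h ^ 4)⁻¹ * y) := by
  rw [Real.sqrt_mul (by positivity), Real.sqrt_inv, show h ^ 4 = (h ^ 2) ^ 2 by ring,
    Real.sqrt_sq (by positivity)]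
  field_simp

theorem mul_pow_le_max_one_mul_pow (C : ℝ) {h : ℝ} (hh : 0 ≤ h) {i : ℕ} (hi : 1 ≤ i) :
    C * h ^ i ≤ (max C 1 * h) ^ i := by
  rw [mul_pow]
  gcongr
  calc C ≤ max C 1 := le_max_left C 1
    _ = max C 1 ^ 1 := (pow_one _).symm
    _ ≤ max C 1 ^ i := pow_le_pow_right₀ (le_max_right C 1) hi

theorem norm_iteratedFDerivWithin_inv_pow_smul_le {E F : Type*} [NormedAddCommGroup E]
    [NormedSpace ℝ E] [NormedAddCommGroup F] [NormedSpace ℝ F] {f : E → F} {s : Set E} {x : E}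
    {C h : ℝ} {i k : ℕ} (hh : 0 < h) (hi : 1 ≤ i) (hf : ContDiffWithinAt ℝ i f s x)
    (hs : UniqueDiffOn ℝ s) (hx : x ∈ s)
    (hfi : ‖iteratedFDerivWithin ℝ i f s x‖ ≤ C * h ^ (k + i)) :
    ‖iteratedFDerivWithin ℝ i ((h ^ k)⁻¹ • f) s x‖ ≤ (max C 1 * h) ^ i := by
  rw [norm_iteratedFDerivWithin_const_smul_apply _ hf hs hx, Real.norm_of_nonneg (by positivity)]
  calc (h ^ k)⁻¹ * ‖iteratedFDerivWithin ℝ i f s x‖ ≤ (h ^ k)⁻¹ * (C * h ^ (k + i)) := by gcongr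
    _ = C * h ^ i := by rw [pow_add]; field_simp
    _ ≤ (max C 1 * h) ^ i := mul_pow_le_max_one_mul_pow C hh.le hi

theorem sqrt_composition_derivative_bound_general (m : ℕ) (C c₁ c₂ : ℝ)
    (hc₁ : 0 < c₁) :
    ∃ C' > 0, ∀ (h : ℝ), 0 < h → h ≤ 1 →
      ∀ (U : Set (EuclideanSpace ℝ (Fin 2))) (f : EuclideanSpace ℝ (Fin 2) → ℝ),
        IsOpen U → Bornology.IsBounded U →
        ContDiffOn ℝ m f U →
        (∀ x ∈ U, c₁ * h ^ 4 ≤ f x ∧ f x ≤ c₂ * h ^ 4) →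
        (∀ j : ℕ, 1 ≤ j → j ≤ m →
          ∀ x ∈ U, ‖iteratedFDerivWithin ℝ j f U x‖ ≤ C * h ^ (4 + j)) →
        ∀ x ∈ U,
          ‖iteratedFDerivWithin ℝ m (fun y => Real.sqrt (f y)) U x‖ ≤
            C' * h ^ (2 + m) := by
  have hsqrt : ContDiffOn ℝ m Real.sqrt (Ioi 0) := fun y hy =>
    (Real.contDiffAt_sqrt (ne_of_gt hy)).contDiffWithinAt
  have hIcc : Icc c₁ c₂ ⊆ Ioi 0 := fun y hy => hc₁.trans_le hy.1
  obtain ⟨K, hK⟩ := hsqrt.exists_norm_iteratedFDerivWithin_comp_le (E := EuclideanSpace ℝ (Fin 2))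
    (uniqueDiffOn_Ioi 0) isCompact_Icc hIcc
  refine ⟨max K 1 * max C 1 ^ m, by positivity, fun h hh _ U f hU _ hf hrange hder x hx => ?_⟩
  have h4 : 0 < h ^ 4 := by positivity
  set φ := (h ^ 4)⁻¹ • f
  have hφ : ContDiffOn ℝ m φ U := hf.const_smul (h ^ 4)⁻¹
  have hφS : MapsTo φ U (Icc c₁ c₂) := fun y hy => by
    obtain ⟨hlo, hhi⟩ := hrange y hy
    exact ⟨(le_inv_mul_iff₀ h4).2 (by linarith), (inv_mul_le_iff₀ h4).2 (by linarith)⟩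
  have hφder (i : ℕ) (hi : 1 ≤ i) (him : i ≤ m) :
      ‖iteratedFDerivWithin ℝ i φ U x‖ ≤ (max C 1 * h) ^ i :=
    norm_iteratedFDerivWithin_inv_pow_smul_le hh hi (hf.of_le (mod_cast him) x hx)
      hU.uniqueDiffOn hx (hder i hi him x hx)
  have hsqrtφ : (fun y => √(f y)) = (h ^ 2) • (Real.sqrt ∘ φ) :=
    funext fun y => Real.sqrt_eq_sq_mul_sqrt_inv_pow_four_mul hh.ne' (f y)
  rw [hsqrtφ, norm_iteratedFDerivWithin_const_smul_apply _
    (hsqrt.comp hφ (hφS.mono_right hIcc) x hx) hU.uniqueDiffOn hx,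
    Real.norm_of_nonneg (by positivity)]
  calc h ^ 2 * ‖iteratedFDerivWithin ℝ m (Real.sqrt ∘ φ) U x‖
      ≤ h ^ 2 * (K * (max C 1 * h) ^ m) := by
        gcongr; exact hK hφ hU.uniqueDiffOn hφS hx hφder
    _ = K * max C 1 ^ m * h ^ (2 + m) := by ring
    _ ≤ max K 1 * max C 1 ^ m * h ^ (2 + m) := by gcongr; exact le_max_left K 1

/-- If `f` is `C^m` on an open bounded set `U ⊆ ℝ²` with `c₁h⁴ ≤ f ≤ c₂h⁴` and
`|D^j f| ≤ C h^{4+j}` for `1 ≤ j ≤ m`, then `g = √f` satisfies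
`|D^m g| ≤ C' h^{2+m}` with `C'` depending only on `m, C, c₁, c₂`. -/
theorem sqrt_composition_derivative_bound (m : ℕ) (C c₁ c₂ : ℝ)
    (hC : 0 < C) (hc₁ : 0 < c₁) (hc₂ : 0 < c₂) :
    ∃ C' > 0, ∀ (h : ℝ), 0 < h → h ≤ 1 →
      ∀ (U : Set (EuclideanSpace ℝ (Fin 2))) (f : EuclideanSpace ℝ (Fin 2) → ℝ),
        IsOpen U → Bornology.IsBounded U →
        ContDiffOn ℝ m f U →
        (∀ x ∈ U, c₁ * h ^ 4 ≤ f x ∧ f x ≤ c₂ * h ^ 4) →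
        (∀ j : ℕ, 1 ≤ j → j ≤ m →
          ∀ x ∈ U, ‖iteratedFDerivWithin ℝ j f U x‖ ≤ C * h ^ (4 + j)) →
        ∀ x ∈ U,
          ‖iteratedFDerivWithin ℝ m (fun y => Real.sqrt (f y)) U x‖ ≤
            C' * h ^ (2 + m) :=
  sqrt_composition_derivative_bound_general m C c₁ c₂ hc₁
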